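/- arXiv:2502.11929 — 7 statements merged into one kernel-verified Lean document; each statement's English description precedes it below -/
import Mathlib

section
/- Let n ≥ 2 be an integer, define a_0 = n, a_{k+1} = a_k^2 - 1, and let P(n) be the set of all primes dividing some a_k. Then P(n) is infinite. -/
/-!
Since `a_{k+2} = a_k² (a_k² - 2)`, every prime dividing `a_k` divides `a_{k+2}`. For `k ≥ 1` we
have `a_k ≥ 3`, so `a_k² - 2 ≡ 2` or `3 (mod 4)` exceeds `2` without being a power of two and has an
odd prime factor; that prime divides `a_{k+2}` but not `a_k`, as a common factor of `a_k` and
`a_k² - 2` divides `2`. Hence the prime divisors of `a_1, a_3, a_5, …` form a strictly increasing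
chain of sets, whose union is infinite.
-/

def seqA (n : ℤ) : ℕ → ℤ
  | 0 => n
  | k + 1 => (seqA n k) ^ 2 - 1

def primeSet (n : ℤ) : Set ℕ := {p : ℕ | p.Prime ∧ ∃ k, (p : ℤ) ∣ seqA n k}

def primeDivisors (a : ℤ) : Set ℕ := {p : ℕ | p.Prime ∧ (p : ℤ) ∣ a}

theorem primeDivisors_mono {a b : ℤ} (h : a ∣ b) : primeDivisors a ⊆ primeDivisors b :=
  fun _ ⟨hp, hpa⟩ => ⟨hp, hpa.trans h⟩

theorem exists_odd_prime_dvd_sq_sub_two {a : ℤ} (ha : 3 ≤ |a|) :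
    ∃ q : ℕ, q.Prime ∧ Odd q ∧ (q : ℤ) ∣ a ^ 2 - 2 := by
  have hsq : 9 ≤ a ^ 2 := by nlinarith [sq_abs a, abs_nonneg a]
  have hlt : 2 < (a ^ 2 - 2).natAbs := by omega
  obtain h4 | ⟨q, hq, hqa, hodd⟩ := Nat.four_dvd_or_exists_odd_prime_and_dvd_of_two_lt hlt
  · have h4' : ((a ^ 2 - 2 : ℤ) : ZMod 4) = 0 :=
      (ZMod.intCast_zmod_eq_zero_iff_dvd _ 4).mpr (Int.natCast_dvd.mpr h4)
    push_cast at h4'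
    have h_sq_mod_four : ∀ x : ZMod 4, x ^ 2 - 2 ≠ 0 := by decide
    exact absurd h4' (h_sq_mod_four a)
  · exact ⟨q, hq, hodd, Int.natCast_dvd.mpr hqa⟩

theorem primeDivisors_ssubset_sq_mul_sq_sub_two {a : ℤ} (ha : 3 ≤ |a|) :
    primeDivisors a ⊂ primeDivisors (a ^ 2 * (a ^ 2 - 2)) := by
  refine Set.ssubset_iff_subset_ne.mpr
    ⟨primeDivisors_mono ((dvd_pow_self a two_ne_zero).mul_right _), fun h => ?_⟩
  obtain ⟨q, hq, hodd, hqa⟩ := exists_odd_prime_dvd_sq_sub_two ha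
  have hq_mem : q ∈ primeDivisors a := h ▸ ⟨hq, hqa.mul_left _⟩
  have hq_two : (q : ℤ) ∣ 2 := by
    simpa using dvd_sub (dvd_pow hq_mem.2 two_ne_zero) hqa
  have hq_eq : q = 2 :=
    (Nat.prime_dvd_prime_iff_eq hq Nat.prime_two).mp (Int.natCast_dvd_natCast.mp hq_two)
  exact Nat.not_even_iff_odd.mpr hodd (hq_eq ▸ even_two)

theorem seqA_add_two (n : ℤ) (k : ℕ) :
    seqA n (k + 2) = seqA n k ^ 2 * (seqA n k ^ 2 - 2) := by
  simp only [seqA]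
  ring

theorem two_le_seqA {n : ℤ} (hn : 2 ≤ n) (k : ℕ) : 2 ≤ seqA n k := by
  induction k with
  | zero => exact hn
  | succ k ih => simp only [seqA]; nlinarith

theorem three_le_seqA_succ {n : ℤ} (hn : 2 ≤ n) (k : ℕ) : 3 ≤ seqA n (k + 1) := by
  have := two_le_seqA hn k
  simp only [seqA]
  nlinarith

theorem strictMono_primeDivisors_seqA_odd {n : ℤ} (hn : 2 ≤ n) :
    StrictMono fun m => primeDivisors (seqA n (2 * m + 1)) := by
  refine strictMono_nat_of_lt_succ fun m => ?_
  have h3 : 3 ≤ |seqA n (2 * m + 1)| := (three_le_seqA_succ hn (2 * m)).trans (le_abs_self _)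
  simpa only [seqA_add_two, show 2 * (m + 1) + 1 = 2 * m + 1 + 2 by ring] using
    primeDivisors_ssubset_sq_mul_sq_sub_two h3

theorem primeDivisors_seqA_subset_primeSet (n : ℤ) (k : ℕ) :
    primeDivisors (seqA n k) ⊆ primeSet n :=
  fun _ ⟨hp, hpa⟩ => ⟨hp, k, hpa⟩

theorem primeSet_infinite (n : ℤ) (hn : 2 ≤ n) : (primeSet n).Infinite :=
  (Set.infinite_iUnion (strictMono_primeDivisors_seqA_odd hn).injective).mono
    (Set.iUnion_subset fun _ => primeDivisors_seqA_subset_primeSet n _)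
end

section
/- Let n ≥ 2 be an integer with sequence a_0 = n, a_{k+1} = a_k^2 - 1, and suppose a_k ≠ 2. Then a_{k+2} has a prime divisor that does not divide a_k * a_{k+1}. -/
theorem Int.not_four_dvd_sq_sub_two (m : ℤ) : ¬ 4 ∣ m ^ 2 - 2 := by
  rw [show (4 : ℤ) = ((4 : ℕ) : ℤ) from rfl, ← ZMod.intCast_zmod_eq_zero_iff_dvd]
  push_cast
  generalize (m : ZMod 4) = x
  revert x
  decide

theorem Int.exists_odd_prime_dvd_of_not_four_dvd {N : ℤ} (h4 : ¬ 4 ∣ N) (hN : 2 < |N|) :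
    ∃ p : ℕ, p.Prime ∧ p ≠ 2 ∧ (p : ℤ) ∣ N := by
  by_contra! h
  have habs := Int.abs_eq_natAbs N
  obtain ⟨e, hpow⟩ : ∃ e, N.natAbs = 2 ^ e :=
    ⟨_, Nat.eq_prime_pow_of_unique_prime_dvd (by omega) fun hp hd => by
      by_contra hne
      exact h _ hp hne (Int.natCast_dvd.mpr hd)⟩
  have he : e ≤ 1 := by
    by_contra! he
    exact h4 (Int.natCast_dvd.mpr (hpow ▸ pow_dvd_pow 2 he))
  have : N.natAbs ≤ 2 := hpow ▸ Nat.pow_le_pow_right two_pos he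
  omega

theorem dvd_two_of_dvd_sq_sub_two_of_dvd_mul {R : Type*} [CommRing R] {p m : R} (hp : Prime p)
    (h : p ∣ m ^ 2 - 2) (h' : p ∣ m * (m ^ 2 - 1)) : p ∣ 2 := by
  rcases hp.dvd_mul.mp h' with hm | hm
  · have hm2 : p ∣ m ^ 2 := sq m ▸ dvd_mul_of_dvd_left hm m
    simpa using hm2.sub h
  · exact absurd (by convert hm.sub h using 1; ring) hp.not_dvd_one

theorem new_prime_divisor (n : ℤ) (hn : 2 ≤ n) (k : ℕ) (hk : seqA n k ≠ 2) :
    ∃ p : ℕ, p.Prime ∧ (p : ℤ) ∣ seqA n (k + 2) ∧ ¬ (p : ℤ) ∣ seqA n k * seqA n (k + 1) := by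
  set m := seqA n k
  have hm : 3 ≤ m := lt_of_le_of_ne (two_le_seqA hn k) (Ne.symm hk)
  obtain ⟨p, hp, hp2, hpm⟩ := Int.exists_odd_prime_dvd_of_not_four_dvd
    (Int.not_four_dvd_sq_sub_two m) (by rw [abs_of_nonneg (by nlinarith)]; nlinarith)
  refine ⟨p, hp, seqA_add_two n k ▸ dvd_mul_of_dvd_right hpm _, fun h => hp2 ?_⟩
  have h2 := dvd_two_of_dvd_sq_sub_two_of_dvd_mul (Nat.prime_iff_prime_int.mp hp) hpm h
  exact (Nat.prime_dvd_prime_iff_eq hp Nat.prime_two).mp (by exact_mod_cast h2)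
end

section
/- Let n ≥ 2 be an integer with sequence a_0 = n, a_{k+1} = a_k^2 - 1. For each k, the set of primes dividing at least one of a_0, a_1, ..., a_{k+1} equals the set of primes dividing the product a_k * a_{k+1}. -/
theorem dvd_sq_sub_one_sq_sub_one {R : Type*} [CommRing R] (x : R) : x ∣ (x ^ 2 - 1) ^ 2 - 1 :=
  ⟨x * (x ^ 2 - 2), by ring⟩

theorem seqA_dvd_seqA_add_two_mul (n : ℤ) (j i : ℕ) : seqA n j ∣ seqA n (j + 2 * i) := by
  induction i with
  | zero => rfl
  | succ i ih => exact ih.trans (dvd_sq_sub_one_sq_sub_one (seqA n (j + 2 * i)))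

theorem seqA_dvd_or_dvd_succ (n : ℤ) {j k : ℕ} (hj : j ≤ k + 1) :
    seqA n j ∣ seqA n k ∨ seqA n j ∣ seqA n (k + 1) := by
  obtain ⟨i, hi | hi⟩ : ∃ i, k = j + 2 * i ∨ k + 1 = j + 2 * i := ⟨(k + 1 - j) / 2, by omega⟩
  · exact .inl (hi ▸ seqA_dvd_seqA_add_two_mul n j i)
  · exact .inr (hi ▸ seqA_dvd_seqA_add_two_mul n j i)

theorem primes_dividing_initial_terms_general (n : ℤ) (k : ℕ) :
    {p : ℕ | p.Prime ∧ ∃ j ≤ k + 1, (p : ℤ) ∣ seqA n j} =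
      {p : ℕ | p.Prime ∧ (p : ℤ) ∣ seqA n k * seqA n (k + 1)} := by
  ext p
  simp only [Set.mem_ofPred_eq, and_congr_right_iff]
  intro hp
  rw [(Nat.prime_iff_prime_int.mp hp).dvd_mul]
  constructor
  · rintro ⟨j, hj, hpj⟩
    exact (seqA_dvd_or_dvd_succ n hj).imp hpj.trans hpj.trans
  · rintro (hpk | hpk)
    exacts [⟨k, k.le_succ, hpk⟩, ⟨k + 1, le_rfl, hpk⟩]

theorem primes_dividing_initial_terms (n : ℤ) (hn : 2 ≤ n) (k : ℕ) :
    {p : ℕ | p.Prime ∧ ∃ j ≤ k + 1, (p : ℤ) ∣ seqA n j} =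
      {p : ℕ | p.Prime ∧ (p : ℤ) ∣ seqA n k * seqA n (k + 1)} :=
  primes_dividing_initial_terms_general n k
end

section
/- For a monic polynomial g ∈ Z[x] of degree d, the discriminant of g(x^2 - 1) equals (-4)^d * g(-1) * (disc g)^2. -/
open Polynomial

/-- The discriminant of a monic integer polynomial, computed via its complex roots:
`disc g = (-1)^(d(d-1)/2) * ∏_i g'(rᵢ)`, where the `rᵢ` are the complex roots of `g`
(with multiplicity) and `d` is the degree. -/
noncomputable def intDisc (g : Polynomial ℤ) : ℂ :=
  (-1) ^ (g.natDegree * (g.natDegree - 1) / 2) *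
    (((g.map (Int.castRingHom ℂ)).roots.map
      fun r => ((g.map (Int.castRingHom ℂ)).derivative).eval r).prod)

noncomputable def mySqrt (r : ℂ) : ℂ :=
  Classical.choose (IsAlgClosed.exists_pow_nat_eq (r + 1) (n := 2) (by norm_num))

lemma mySqrt_sq (r : ℂ) : (mySqrt r) ^ 2 = r + 1 :=
  Classical.choose_spec (IsAlgClosed.exists_pow_nat_eq (r + 1) (n := 2) (by norm_num))

theorem disc_comp_sq_sub_one (g : Polynomial ℤ) (hg : g.Monic) (d : ℕ) (hd : g.natDegree = d)
    (hd1 : 1 ≤ d) :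
    intDisc (g.comp (X ^ 2 - 1)) = (-4) ^ d * ((g.eval (-1) : ℤ) : ℂ) * (intDisc g) ^ 2 := by
  set φ := Int.castRingHom ℂ with hφ
  set gc : ℂ[X] := g.map φ with hgc
  have hgcm : gc.Monic := hg.map φ
  have hgcd : gc.natDegree = d := by rw [hgc, hg.natDegree_map, hd]
  set R : Multiset ℂ := gc.roots with hR
  have hsplit : Splits gc := IsAlgClosed.splits gc
  have hcard : Multiset.card R = d := by
    rw [hR, splits_iff_card_roots.mp hsplit, hgcd]
  have hprod : gc = (R.map fun r => X - C r).prod :=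
    hsplit.eq_prod_roots_of_monic hgcm
  -- the composed polynomial over ℂ
  have hGc : (g.comp (X ^ 2 - 1)).map φ = gc.comp (X ^ 2 - 1) := by
    rw [Polynomial.map_comp]
    simp [hgc]
  -- degree computations
  have hq2 : ((X : ℤ[X]) ^ 2 - 1).natDegree = 2 := by
    compute_degree!
  have hN : (g.comp (X ^ 2 - 1)).natDegree = 2 * d := by
    rw [natDegree_comp, hd, hq2, mul_comm]
  -- factor the composed polynomial into linear factors
  set T : Multiset ℂ := R.bind fun r => {mySqrt r, -mySqrt r} with hT
  have hfac : gc.comp (X ^ 2 - 1) = (T.map fun t => X - C t).prod := by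
    rw [hT, Multiset.map_bind, Multiset.prod_bind]
    conv_lhs => rw [hprod]
    rw [multiset_prod_comp, Multiset.map_map]
    refine congrArg Multiset.prod (Multiset.map_congr rfl ?_)
    intro r _
    simp only [Function.comp_apply, sub_comp, X_comp, C_comp, one_comp,
      Multiset.insert_eq_cons, Multiset.map_cons, Multiset.map_singleton,
      Multiset.prod_cons, Multiset.prod_singleton, map_neg, sub_neg_eq_add]
    have h2 : ((X : ℂ[X]) - C (mySqrt r)) * (X + C (mySqrt r))
        = X ^ 2 - C (mySqrt r) ^ 2 := by ring
    rw [h2, ← C_pow, mySqrt_sq, C_add, map_one]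
    ring
  have hroots : (gc.comp (X ^ 2 - 1)).roots = T := by
    rw [hfac, roots_multiset_prod_X_sub_C]
  -- derivative evaluation
  have hder : ∀ t : ℂ, ((gc.comp (X ^ 2 - 1)).derivative).eval t
      = 2 * t * (gc.derivative.eval (t ^ 2 - 1)) := by
    intro t
    rw [derivative_comp]
    simp [eval_comp]
    norm_num
  -- the main product
  have hP : (T.map fun t => ((gc.comp (X ^ 2 - 1)).derivative).eval t).prod
      = (-4) ^ d * ((-1) ^ d * gc.eval (-1)) *
        ((R.map fun r => gc.derivative.eval r).prod) ^ 2 := by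
    rw [hT, Multiset.map_bind, Multiset.prod_bind]
    have key : (R.map fun r =>
        (({mySqrt r, -mySqrt r} : Multiset ℂ).map
          fun t => ((gc.comp (X ^ 2 - 1)).derivative).eval t).prod).prod
        = (R.map fun r => (-4) * (r + 1) * (gc.derivative.eval r) ^ 2).prod := by
      refine congrArg Multiset.prod (Multiset.map_congr rfl ?_)
      intro r _
      simp only [Multiset.insert_eq_cons, Multiset.map_cons, Multiset.map_singleton,
        Multiset.prod_cons, Multiset.prod_singleton, hder]
      have hs := mySqrt_sq r
      have hs' : (-mySqrt r) ^ 2 = r + 1 := by rw [neg_pow]; simp [hs]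
      rw [hs, hs']
      have h3 : ∀ A : ℂ, (2 * mySqrt r * A) * (2 * (-mySqrt r) * A)
          = -4 * (mySqrt r ^ 2) * A ^ 2 := by intro A; ring
      rw [add_sub_cancel_right, h3, hs]
    rw [key]
    have e1 : (R.map fun r => (-4 : ℂ) * (r + 1) * (gc.derivative.eval r) ^ 2).prod
        = (R.map fun _ => (-4 : ℂ)).prod * (R.map fun r => r + 1).prod *
          (R.map fun r => (gc.derivative.eval r) ^ 2).prod := by
      rw [Multiset.prod_map_mul, Multiset.prod_map_mul]
    have e2 : (R.map fun _ : ℂ => (-4 : ℂ)).prod = (-4) ^ d := by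
      rw [Multiset.map_const', Multiset.prod_replicate, hcard]
    have e3 : (R.map fun r => r + 1).prod = (-1) ^ d * gc.eval (-1) := by
      have h1 : gc.eval (-1) = (R.map fun r => -1 - r).prod := by
        conv_lhs => rw [hprod]
        rw [eval_multiset_prod, Multiset.map_map]
        simp
      have h2 : (R.map fun r => r + 1).prod
          = (R.map fun r => (-1 : ℂ) * (-1 - r)).prod := by
        refine congrArg Multiset.prod (Multiset.map_congr rfl ?_)
        intro r _; ring
      rw [h2, Multiset.prod_map_mul, Multiset.map_const', Multiset.prod_replicate,
        hcard, h1]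
    have e4 : (R.map fun r => (gc.derivative.eval r) ^ 2).prod
        = ((R.map fun r => gc.derivative.eval r).prod) ^ 2 :=
      Multiset.prod_map_pow
    rw [e1, e2, e3, e4]
  -- now assemble
  set P : ℂ := (R.map fun r => gc.derivative.eval r).prod with hPdef
  have hsq : (intDisc g) ^ 2 = P ^ 2 := by
    have hev2 : Even (g.natDegree * (g.natDegree - 1) / 2 * 2) := even_two.mul_left _
    rw [intDisc, mul_pow, ← pow_mul, hev2.neg_one_pow, one_mul]
  have hsign : ((-1 : ℂ)) ^ ((g.comp (X ^ 2 - 1)).natDegree *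
      ((g.comp (X ^ 2 - 1)).natDegree - 1) / 2) = (-1) ^ d := by
    rw [hN]
    have h0 : 2 * d * (2 * d - 1) = 2 * ((2 * d - 1) * d) := by ring
    have : 2 * d * (2 * d - 1) / 2 = (2 * d - 1) * d := by
      rw [h0, Nat.mul_div_cancel_left _ (by norm_num : 0 < 2)]
    rw [this, pow_mul, Odd.neg_one_pow ⟨d - 1, by omega⟩]
  have hev : gc.eval (-1) = ((g.eval (-1) : ℤ) : ℂ) := by
    rw [hgc, eval_map]
    have : ((-1 : ℂ)) = φ (-1) := by simp
    rw [this, eval₂_at_apply]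
    simp
  rw [intDisc, hGc, hroots, hP, hsign, hsq, hev]
  have h1 : ((-1 : ℂ) ^ d) * ((-1) ^ d) = 1 := by
    rw [← mul_pow]; norm_num
  calc (-1 : ℂ) ^ d * ((-4) ^ d * ((-1) ^ d * ((g.eval (-1) : ℤ) : ℂ)) * P ^ 2)
      = ((-1 : ℂ) ^ d * (-1) ^ d) * ((-4) ^ d * ((g.eval (-1) : ℤ) : ℂ) * P ^ 2) := by ring
    _ = (-4) ^ d * ((g.eval (-1) : ℤ) : ℂ) * P ^ 2 := by rw [h1, one_mul]
end

section
/- Let p ≥ 3 be a prime and S̄(p) ⊆ F_p the set of elements that eventually reach 0 under iteration of x ↦ x^2 - 1. Then S̄(p) = {-1, 0, 1} if and only if 2 is not a quadratic residue modulo p, equivalently p ≡ ±3 (mod 8). -/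
/-!
Under `f x = x ^ 2 - 1` the preimages of `0` are `±1`, the only preimage of `-1` is `0`, and
the preimages of `1` are the square roots of `2`. So `{-1, 0, 1}`, which reaches `0`, is the
whole backward orbit of `0` exactly when `2` is not a square; over `F_p` this is decided by the
second supplement to quadratic reciprocity.
-/

/-- `S̄(p)`: elements of `F_p` that eventually reach `0` under iteration of `x ↦ x^2 - 1`. -/
def Sbar (p : ℕ) : Set (ZMod p) := {a : ZMod p | ∃ k : ℕ, (fun x : ZMod p => x ^ 2 - 1)^[k] a = 0}

section SqSubOne

variable {R : Type*} [CommRing R]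

theorem mem_neg_one_zero_one_of_sq_sub_one_mem [IsDomain R] (h2 : ¬ IsSquare (2 : R)) {a : R}
    (ha : a ^ 2 - 1 ∈ ({-1, 0, 1} : Set R)) : a ∈ ({-1, 0, 1} : Set R) := by
  simp only [Set.mem_insert_iff, Set.mem_singleton_iff] at ha ⊢
  rcases ha with h | h | h
  · exact Or.inr (Or.inl (sq_eq_zero_iff.mp (by linear_combination h)))
  · rcases sq_eq_one_iff.mp (by linear_combination h : a ^ 2 = 1) with h1 | h1
    · exact Or.inr (Or.inr h1)
    · exact Or.inl h1
  · exact absurd ⟨a, by linear_combination -h⟩ h2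

theorem mem_neg_one_zero_one_of_iterate_sq_sub_one_eq_zero [IsDomain R]
    (h2 : ¬ IsSquare (2 : R)) {a : R} {k : ℕ} (hk : (fun x : R => x ^ 2 - 1)^[k] a = 0) :
    a ∈ ({-1, 0, 1} : Set R) := by
  induction k generalizing a with
  | zero => exact Or.inr (Or.inl hk)
  | succ n ih =>
    rw [Function.iterate_succ_apply] at hk
    exact mem_neg_one_zero_one_of_sq_sub_one_mem h2 (ih hk)

theorem exists_iterate_sq_sub_one_eq_zero_of_mem {a : R} (ha : a ∈ ({-1, 0, 1} : Set R)) :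
    ∃ k, (fun x : R => x ^ 2 - 1)^[k] a = 0 := by
  simp only [Set.mem_insert_iff, Set.mem_singleton_iff] at ha
  rcases ha with rfl | rfl | rfl
  · exact ⟨1, by norm_num⟩
  · exact ⟨0, rfl⟩
  · exact ⟨1, by norm_num⟩

theorem iterate_sq_sub_one_two_of_sq_eq_two {r : R} (hr : r ^ 2 = 2) :
    (fun x : R => x ^ 2 - 1)^[2] r = 0 := by
  simp only [Function.iterate_succ_apply', Function.iterate_zero_apply, hr]
  norm_num

theorem notMem_neg_one_zero_one_of_sq_eq_two [Nontrivial R] (h2 : (2 : R) ≠ 0) {r : R}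
    (hr : r ^ 2 = 2) : r ∉ ({-1, 0, 1} : Set R) := by
  simp only [Set.mem_insert_iff, Set.mem_singleton_iff]
  rintro (rfl | rfl | rfl)
  · exact one_ne_zero (by linear_combination -hr : (1 : R) = 0)
  · exact h2 (by linear_combination -hr)
  · exact one_ne_zero (by linear_combination -hr : (1 : R) = 0)

theorem setOf_exists_iterate_sq_sub_one_eq_zero_eq_iff [IsDomain R] (h2 : (2 : R) ≠ 0) :
    {a : R | ∃ k, (fun x : R => x ^ 2 - 1)^[k] a = 0} = {-1, 0, 1} ↔ ¬ IsSquare (2 : R) := by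
  constructor
  · rintro hS ⟨r, hr⟩
    have hr2 : r ^ 2 = 2 := by rw [hr, sq]
    refine notMem_neg_one_zero_one_of_sq_eq_two h2 hr2 ?_
    exact hS ▸ ⟨2, iterate_sq_sub_one_two_of_sq_eq_two hr2⟩
  · intro hsq
    ext a
    exact ⟨fun ⟨_, hk⟩ ↦ mem_neg_one_zero_one_of_iterate_sq_sub_one_eq_zero hsq hk,
      exists_iterate_sq_sub_one_eq_zero_of_mem⟩

end SqSubOne

theorem Sbar_eq_iff (p : ℕ) (hp : p.Prime) (h3 : 3 ≤ p) :
    (Sbar p = {-1, 0, 1} ↔ ¬ IsSquare (2 : ZMod p)) ∧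
      (¬ IsSquare (2 : ZMod p) ↔ (p % 8 = 3 ∨ p % 8 = 5)) := by
  have : Fact p.Prime := ⟨hp⟩
  have hp2 : p ≠ 2 := by omega
  have h2 : (2 : ZMod p) ≠ 0 := Ring.two_ne_zero (by rwa [ZMod.ringChar_zmod_n])
  refine ⟨setOf_exists_iterate_sq_sub_one_eq_zero_eq_iff h2, ?_⟩
  rw [ZMod.exists_sq_eq_two_iff hp2]
  have hodd : p % 2 = 1 := Nat.odd_iff.mp (hp.odd_of_ne_two hp2)
  omega
end

section
/- There are infinitely many pairwise distinct sets among the sets P(n) for n ≥ 2, where P(n) is the set of primes dividing some term of the sequence a_0 = n, a_{k+1} = a_k^2 - 1. More precisely, if p and q are distinct primes with p, q ≡ ±3 (mod 8), then P(p) ≠ P(q). -/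
lemma step {r : ℕ} [hF : Fact r.Prime] (h8 : r % 8 = 3 ∨ r % 8 = 5) (y : ZMod r)
    (h : y ^ 2 - 1 = 0 ∨ y ^ 2 - 1 = 1 ∨ y ^ 2 - 1 = -1) : y = 0 ∨ y = 1 ∨ y = -1 := by
  have hr2 : r ≠ 2 := by rcases h8 with h | h <;> omega
  rcases h with h | h | h
  · have h1 : y ^ 2 = 1 := by linear_combination h
    have : (y - 1) * (y + 1) = 0 := by ring_nf; linear_combination h1
    rcases mul_eq_zero.mp this with h' | h'
    · right; left; linear_combination h'
    · right; right; linear_combination h'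
  · exfalso
    have h2 : y ^ 2 = 2 := by linear_combination h
    have : IsSquare (2 : ZMod r) := ⟨y, by rw [← h2]; ring⟩
    rw [ZMod.exists_sq_eq_two_iff hr2] at this
    rcases this with h' | h' <;> omega
  · left
    have h0 : y ^ 2 = 0 := by linear_combination h
    exact pow_eq_zero_iff (n := 2) (by norm_num) |>.mp h0

lemma key {r : ℕ} (hr : r.Prime) (h8 : r % 8 = 3 ∨ r % 8 = 5) (m : ℤ) (k : ℕ)
    (h : (r : ℤ) ∣ seqA m k) :
    (m : ZMod r) = 0 ∨ (m : ZMod r) = 1 ∨ (m : ZMod r) = -1 := by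
  haveI : Fact r.Prime := ⟨hr⟩
  have main : ∀ k, ((seqA m k : ZMod r) = 0 ∨ (seqA m k : ZMod r) = 1 ∨
      (seqA m k : ZMod r) = -1) → ((m : ZMod r) = 0 ∨ (m : ZMod r) = 1 ∨ (m : ZMod r) = -1) := by
    intro k
    induction k with
    | zero => exact fun h => h
    | succ n ih =>
      intro hk
      apply ih
      apply step h8
      have : ((seqA m (n+1) : ℤ) : ZMod r) = (seqA m n : ZMod r) ^ 2 - 1 := by
        simp [seqA]
      rw [this] at hk
      exact hk
  apply main k
  left
  exact_mod_cast (ZMod.intCast_zmod_eq_zero_iff_dvd _ _).mpr h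

lemma natCast_mod8 {p : ℕ} (h : (p : ZMod 8) = 3) : p % 8 = 3 := by
  have : (p : ZMod 8) = ((3 : ℕ) : ZMod 8) := by exact_mod_cast h
  have := (ZMod.natCast_eq_natCast_iff p 3 8).mp this
  unfold Nat.ModEq at this
  omega

lemma distinct_primeSets (p q : ℕ) (hp : p.Prime) (hq : q.Prime)
    (hp8 : p % 8 = 3 ∨ p % 8 = 5) (hq8 : q % 8 = 3 ∨ q % 8 = 5)
    (hlt : p < q) : primeSet (p : ℤ) ≠ primeSet (q : ℤ) := by
  intro heq
  have hqmem : q ∈ primeSet (q : ℤ) := ⟨hq, 0, by simp [seqA]⟩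
  rw [← heq] at hqmem
  have hqmem' : q.Prime ∧ ∃ k, (q : ℤ) ∣ seqA (p : ℤ) k := hqmem
  obtain ⟨hdum, k, hdvd⟩ := hqmem'
  have hkey := key hq hq8 (p : ℤ) k hdvd
  haveI : Fact q.Prime := ⟨hq⟩
  -- translate to statements about p % q
  have hpq : p % q = p := Nat.mod_eq_of_lt hlt
  rcases hkey with h | h | h
  · rw [show ((p : ℤ) : ZMod q) = ((p : ℕ) : ZMod q) by push_cast; ring,
      ZMod.natCast_eq_zero_iff] at h
    have := Nat.le_of_dvd (by omega) h
    omega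
  · have h' : ((p : ℕ) : ZMod q) = ((1 : ℕ) : ZMod q) := by push_cast at h ⊢; rw [h]
    have := (ZMod.natCast_eq_natCast_iff _ _ _).mp h'
    unfold Nat.ModEq at this
    have h1 : 1 % q = 1 := Nat.mod_eq_of_lt (by omega)
    have : p = 1 := by omega
    exact hp.one_lt.ne' (by omega)
  · have h' : ((p : ℕ) : ZMod q) = ((q - 1 : ℕ) : ZMod q) := by
      push_cast [Nat.cast_sub hq.one_lt.le] at h ⊢
      rw [h]; simp
    have := (ZMod.natCast_eq_natCast_iff _ _ _).mp h'
    unfold Nat.ModEq at this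
    have h1 : (q - 1) % q = q - 1 := Nat.mod_eq_of_lt (by omega)
    -- p = q - 1, but both p and q are odd
    have hpodd : p % 2 = 1 := by omega
    have hqodd : q % 2 = 1 := by omega
    omega

theorem infinitely_many_classes :
    (∀ p q : ℕ, p.Prime → q.Prime → (p % 8 = 3 ∨ p % 8 = 5) → (q % 8 = 3 ∨ q % 8 = 5) →
      p ≠ q → primeSet (p : ℤ) ≠ primeSet (q : ℤ)) ∧
    {S : Set ℕ | ∃ n : ℤ, 2 ≤ n ∧ S = primeSet n}.Infinite := by
  have part1 : ∀ p q : ℕ, p.Prime → q.Prime → (p % 8 = 3 ∨ p % 8 = 5) →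
      (q % 8 = 3 ∨ q % 8 = 5) → p ≠ q → primeSet (p : ℤ) ≠ primeSet (q : ℤ) := by
    intro p q hp hq hp8 hq8 hne
    rcases Nat.lt_or_ge p q with h | h
    · exact distinct_primeSets p q hp hq hp8 hq8 h
    · have hlt : q < p := lt_of_le_of_ne h (fun h' => hne h'.symm)
      exact fun heq => distinct_primeSets q p hq hp hq8 hp8 hlt heq.symm
  refine ⟨part1, ?_⟩
  have hunit : IsUnit ((3 : ℕ) : ZMod 8) := by decide
  have hinf : {p : ℕ | p.Prime ∧ (p : ZMod 8) = ((3 : ℕ) : ZMod 8)}.Infinite :=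
    Nat.infinite_setOfPred_prime_and_eq_mod hunit
  have himg : ((fun p : ℕ => primeSet (p : ℤ)) ''
      {p : ℕ | p.Prime ∧ (p : ZMod 8) = ((3 : ℕ) : ZMod 8)}).Infinite := by
    apply Set.Infinite.image ?_ hinf
    intro a ha b hb hab
    by_contra hne
    exact part1 a b ha.1 hb.1 (Or.inl (natCast_mod8 (by exact_mod_cast ha.2)))
      (Or.inl (natCast_mod8 (by exact_mod_cast hb.2))) hne hab
  apply himg.mono
  rintro S ⟨p, ⟨hp, -⟩, rfl⟩
  exact ⟨(p : ℤ), by exact_mod_cast hp.two_le, rfl⟩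
end

section
/- For n ≥ 2, let P'(n) be the set of primes p ≡ ±3 (mod 8) dividing some term of the sequence a_0 = n, a_{k+1} = a_k^2 - 1. Then P'(n) = { p prime : p ≡ ±3 (mod 8) and p divides (n-1) n (n+1) }. -/
lemma seqA_back (n : ℤ) (p : ℕ) [hp : Fact p.Prime]
    (hp8 : p % 8 = 3 ∨ p % 8 = 5) :
    ∀ k, ((seqA n k : ZMod p) = 0 ∨ (seqA n k : ZMod p) = 1 ∨ (seqA n k : ZMod p) = -1) →
      ((n : ZMod p) = 0 ∨ (n : ZMod p) = 1 ∨ (n : ZMod p) = -1) := by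
  have hp2 : p ≠ 2 := by rcases hp8 with h | h <;> omega
  have htwo : ¬ IsSquare (2 : ZMod p) := by
    rw [ZMod.exists_sq_eq_two_iff hp2]
    rcases hp8 with h | h <;> omega
  intro k
  induction k with
  | zero => exact fun h => h
  | succ k ih =>
    intro h
    apply ih
    set x : ZMod p := ((seqA n k : ℤ) : ZMod p) with hx
    have hval : ((seqA n (k+1) : ℤ) : ZMod p) = x ^ 2 - 1 := by
      simp [seqA, hx]
    rw [hval] at h
    rcases h with h | h | h
    · -- x^2 = 1
      have : x ^ 2 = 1 := by linear_combination h
      have h1 : (x - 1) * (x + 1) = 0 := by linear_combination this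
      rcases mul_eq_zero.mp h1 with h2 | h2
      · right; left; linear_combination h2
      · right; right; linear_combination h2
    · -- x^2 = 2
      exfalso
      apply htwo
      exact ⟨x, by linear_combination -h⟩
    · -- x^2 = 0
      left
      have : x ^ 2 = 0 := by linear_combination h
      exact pow_eq_zero_iff (n := 2) (by norm_num) |>.mp this

theorem primeSet_pm3_mod_8 (n : ℤ) (hn : 2 ≤ n) :
    {p : ℕ | p.Prime ∧ (p % 8 = 3 ∨ p % 8 = 5) ∧ ∃ k, (p : ℤ) ∣ seqA n k} =
      {p : ℕ | p.Prime ∧ (p % 8 = 3 ∨ p % 8 = 5) ∧ (p : ℤ) ∣ (n - 1) * n * (n + 1)} := by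
  ext p
  simp only [Set.mem_setOf_eq]
  constructor
  · rintro ⟨hp, hp8, k, hk⟩
    haveI : Fact p.Prime := ⟨hp⟩
    refine ⟨hp, hp8, ?_⟩
    have h0 : ((seqA n k : ℤ) : ZMod p) = 0 := by
      exact (ZMod.intCast_zmod_eq_zero_iff_dvd _ _).mpr hk
    have := seqA_back n p hp8 k (Or.inl h0)
    rw [← ZMod.intCast_zmod_eq_zero_iff_dvd]
    push_cast
    rcases this with h | h | h
    · rw [h]; ring
    · rw [h]; ring
    · rw [h]; ring
  · rintro ⟨hp, hp8, hd⟩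
    haveI : Fact p.Prime := ⟨hp⟩
    refine ⟨hp, hp8, ?_⟩
    have hprime : Prime (p : ℤ) := Int.prime_iff_natAbs_prime.mpr (by simpa using hp)
    rcases hprime.dvd_mul.mp hd with h | h
    · rcases hprime.dvd_mul.mp h with h | h
      · refine ⟨1, ?_⟩
        have e : seqA n 1 = (n - 1) * (n + 1) := by simp [seqA]; ring
        rw [e]; exact h.mul_right _
      · exact ⟨0, h⟩
    · exact ⟨1, by
        have : (n : ℤ) ^ 2 - 1 = (n - 1) * (n + 1) := by ring
        simp only [seqA, this]
        exact Dvd.dvd.mul_left h (n - 1)⟩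
end
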